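/- arXiv:1706.00849 — 5 statements merged into one kernel-verified Lean document; each statement's English description precedes it below -/
import Mathlib

section
/- The standard n-sided die ties any n-sided die: if D is a multiset of n integers each in {1,...,n} with sum n(n+1)/2, then the probability that a uniform roll of D exceeds a uniform independent roll of {1,2,...,n}, plus half the probability of a tie, equals 1/2. -/
/-- An `n`-sided die: a multiset of `n` integers, each in `{1,…,n}`, summing to `n(n+1)/2`. -/
def IsDie (n : ℕ) (D : Multiset ℕ) : Prop :=
  Multiset.card D = n ∧ (∀ d ∈ D, 1 ≤ d ∧ d ≤ n) ∧ D.sum = n * (n + 1) / 2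

/-- The standard die `[1,2,…,n]`. -/
def std (n : ℕ) : Multiset ℕ := (Multiset.range n).map (· + 1)

/-- Number of ordered pairs `(a,b)` with `a ∈ A`, `b ∈ B`, `a > b`. -/
def wins (A B : Multiset ℕ) : ℕ :=
  Multiset.countP (fun p => p.2 < p.1) (A ×ˢ B)

/-- Number of ordered pairs `(a,b)` with `a ∈ A`, `b ∈ B`, `a = b`. -/
def ties (A B : Multiset ℕ) : ℕ :=
  Multiset.countP (fun p => p.1 = p.2) (A ×ˢ B)

/-- Payoff of `A` against `B`: `P(A > B) + (1/2) P(A = B)` under uniform independent rolls. -/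
def payoff (n : ℕ) (A B : Multiset ℕ) : ℚ :=
  ((wins A B : ℚ) + (ties A B : ℚ) / 2) / (n ^ 2)

/-- `A` beats `B` if strictly more pairs favor `A` than favor `B`. -/
def Beats (A B : Multiset ℕ) : Prop := wins B A < wins A B

lemma countP_product (A B : Multiset ℕ) (p : ℕ → ℕ → Prop) [∀ a, DecidablePred (p a)] :
    Multiset.countP (fun q : ℕ × ℕ => p q.1 q.2) (A ×ˢ B)
      = (A.map (fun a => Multiset.countP (p a) B)).sum := by
  induction A using Multiset.induction with
  | empty => simp [Multiset.zero_product]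
  | cons a s ih =>
      rw [Multiset.cons_product, Multiset.countP_add, Multiset.countP_map, Multiset.map_cons,
        Multiset.sum_cons, ih]
      simp [Multiset.countP_eq_card_filter]

lemma countP_lt_range (d n : ℕ) :
    Multiset.countP (fun x => x + 1 < d) (Multiset.range n) = min (d - 1) n := by
  induction n with
  | zero => simp
  | succ n ih =>
      rw [Multiset.range_succ, Multiset.countP_cons, ih]
      split_ifs with h <;> omega

lemma countP_eq_range (d n : ℕ) :
    Multiset.countP (fun x => d = x + 1) (Multiset.range n)
      = if 1 ≤ d ∧ d ≤ n then 1 else 0 := by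
  induction n with
  | zero =>
      simp only [Multiset.range_zero, Multiset.countP_zero]
      split_ifs with h <;> omega
  | succ n ih =>
      rw [Multiset.range_succ, Multiset.countP_cons, ih]
      split_ifs with h1 h2 h3 <;> omega

/-- The standard die ties any die: payoff of any die against the standard die is 1/2. -/
theorem std_ties_any (n : ℕ) (hn : 0 < n) (D : Multiset ℕ) (hD : IsDie n D) :
    payoff n D (std n) = 1 / 2 := by
  obtain ⟨hcard, hmem, hsum⟩ := hD
  -- compute wins
  have hw : wins D (std n) = (D.map (fun d => d - 1)).sum := by
    have := countP_product D (std n) (fun a b => b < a)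
    rw [wins, this]
    congr 1
    apply Multiset.map_congr rfl
    intro d hd
    rw [std, Multiset.countP_map]
    have h1 : Multiset.countP (fun x => x + 1 < d) (Multiset.range n) = min (d-1) n :=
      countP_lt_range d n
    rw [← Multiset.countP_eq_card_filter, h1]
    have := hmem d hd
    omega
  have ht : ties D (std n) = n := by
    have := countP_product D (std n) (fun a b => a = b)
    rw [ties, this]
    have : D.map (fun d => Multiset.countP (fun b => d = b) (std n)) = D.map (fun _ => 1) := by
      apply Multiset.map_congr rfl
      intro d hd
      rw [std, Multiset.countP_map, ← Multiset.countP_eq_card_filter,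
        countP_eq_range, if_pos (hmem d hd)]
    rw [this, Multiset.map_const', Multiset.sum_replicate, hcard, smul_eq_mul, mul_one]
  -- sum of (d-1) over D
  have hsub : (D.map (fun d => d - 1)).sum + n = D.sum := by
    have : D.map (fun d => d - 1 + 1) = D.map id := by
      apply Multiset.map_congr rfl
      intro d hd
      have := hmem d hd
      simp; omega
    have h2 : (D.map (fun d => (d - 1) + 1)).sum
        = (D.map (fun d => d - 1)).sum + (D.map (fun _ => 1)).sum := Multiset.sum_map_add
    rw [this] at h2
    simp only [Multiset.map_id, Multiset.map_const', Multiset.sum_replicate, hcard,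
      smul_eq_mul, mul_one] at h2
    omega
  have heven : 2 ∣ n * (n + 1) := (Nat.even_mul_succ_self n).two_dvd
  have hkey : 2 * wins D (std n) + ties D (std n) = n ^ 2 := by
    rw [hw, ht]
    have h2 : 2 * D.sum = n * (n + 1) := by omega
    have : n * (n + 1) = n ^ 2 + n := by ring
    omega
  have hn2 : ((n : ℚ) ^ 2) ≠ 0 := by positivity
  rw [payoff]
  have hc : (2 * wins D (std n) + ties D (std n) : ℚ) = (n : ℚ) ^ 2 := by
    exact_mod_cast congrArg (Nat.cast : ℕ → ℚ) hkey
  field_simp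
  push_cast at hc ⊢
  linarith
end

section
/- Let n ≥ 4 and let B be an n-sided die with face counts γ_k, and define ξ_k = γ_k + γ_{k+1} for k = 1,...,n−1. If all ξ_k are equal, then B is the standard die (every γ_k = 1). -/
/-!
Constant `ξ` forces `γ (k + 2) = γ k`, so the counts alternate between `a` on odd faces and `b`
on even faces. For `n = 2q`, counting the faces and summing them give `q (a + b) = 2q` and
`q² a + q (q + 1) b = q (2q + 1)`, whence `a = b = 1`. For `n = 2q + 1` both equations reduce to
`(q + 1) a + q b = 2q + 1`, and integrality finishes once `q ≥ 2`: `a = 0` would force `q ∣ 1`.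
-/

open Finset

section Alternating

variable (a b : ℕ)

theorem sum_Icc_ite_odd (q : ℕ) :
    ∑ k ∈ Icc 1 (2 * q), (if Odd k then a else b) = q * (a + b) := by
  induction q with
  | zero => simp
  | succ q ih =>
    have hodd := odd_two_mul_add_one q
    rw [show 2 * (q + 1) = 2 * q + 1 + 1 by ring, sum_Icc_succ_top (by omega),
      sum_Icc_succ_top (by omega), ih, if_pos hodd, if_neg (Nat.not_odd_iff_even.mpr hodd.add_one)]
    ring

theorem sum_Icc_ite_odd_mul (q : ℕ) :
    ∑ k ∈ Icc 1 (2 * q), (if Odd k then a else b) * k = q ^ 2 * a + q * (q + 1) * b := by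
  induction q with
  | zero => simp
  | succ q ih =>
    have hodd := odd_two_mul_add_one q
    rw [show 2 * (q + 1) = 2 * q + 1 + 1 by ring, sum_Icc_succ_top (by omega),
      sum_Icc_succ_top (by omega), ih, if_pos hodd, if_neg (Nat.not_odd_iff_even.mpr hodd.add_one)]
    ring

end Alternating

theorem eq_ite_odd_of_add_two_eq {γ : ℕ → ℕ} {n : ℕ}
    (hγ : ∀ k, 1 ≤ k → k + 2 ≤ n → γ (k + 2) = γ k) :
    ∀ k ∈ Icc 1 n, γ k = if Odd k then γ 1 else γ 2 := by
  intro k hk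
  rw [mem_Icc] at hk
  induction k using Nat.strong_induction_on with
  | _ k ih =>
    match k, hk with
    | 1, _ => simp
    | 2, _ => simp
    | j + 3, hk =>
      have hpar : Odd (j + 3) ↔ Odd (j + 1) := by simp [parity_simps]
      rw [hγ (j + 1) (by omega) (by omega), ih (j + 1) (by omega) ⟨by omega, by omega⟩]
      simp only [hpar]

theorem ite_odd_weights_eq_one_of_even {q a b : ℕ} (hq : 0 < q) (hcard : q * (a + b) = 2 * q)
    (hsum : q ^ 2 * a + q * (q + 1) * b = q * (2 * q + 1)) : a = 1 ∧ b = 1 := by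
  have hab : a + b = 2 := Nat.eq_of_mul_eq_mul_left hq (by rw [hcard]; ring)
  have hmom : q * (a + b) + b = 2 * q + 1 :=
    Nat.eq_of_mul_eq_mul_left hq (by rw [← hsum]; ring)
  rw [hab] at hmom
  omega

theorem ite_odd_weights_eq_one_of_odd {q a b : ℕ} (hq : 2 ≤ q)
    (hcard : q * (a + b) + a = 2 * q + 1) : a = 1 ∧ b = 1 := by
  rcases a with _ | _ | a
  · have hqb : q * b = 2 * q + 1 := by simpa using hcard
    have hdvd : q ∣ 2 * q + 1 := hqb ▸ dvd_mul_right q b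
    have := Nat.le_of_dvd one_pos ((Nat.dvd_add_right (dvd_mul_left q 2)).mp hdvd)
    omega
  · exact ⟨rfl, by nlinarith⟩
  · nlinarith

namespace IsDie

variable {n : ℕ} {B : Multiset ℕ}

theorem sum_count (hB : IsDie n B) : ∑ k ∈ Icc 1 n, B.count k = n := by
  rw [Multiset.sum_count_eq_card fun d hd => mem_Icc.mpr (hB.2.1 d hd), hB.1]

theorem sum_count_mul (hB : IsDie n B) : ∑ k ∈ Icc 1 n, B.count k * k = n * (n + 1) / 2 := by
  rw [← hB.2.2, sum_multiset_count_of_subset B (Icc 1 n) fun d hd =>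
    mem_Icc.mpr (hB.2.1 d (Multiset.mem_toFinset.mp hd))]
  rfl

theorem ite_odd_weights_eq_one {a b : ℕ} (hn : 4 ≤ n) (hB : IsDie n B)
    (h : ∀ k ∈ Icc 1 n, B.count k = if Odd k then a else b) : a = 1 ∧ b = 1 := by
  have hcard : ∑ k ∈ Icc 1 n, (if Odd k then a else b) = n :=
    (sum_congr rfl fun k hk => (h k hk).symm).trans hB.sum_count
  obtain ⟨q, rfl | rfl⟩ := Nat.even_or_odd' n
  · have hsum : ∑ k ∈ Icc 1 (2 * q), (if Odd k then a else b) * k = q * (2 * q + 1) := by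
      rw [← Nat.mul_div_cancel_left (q * (2 * q + 1)) two_pos, ← mul_assoc]
      exact (sum_congr rfl fun k hk => by rw [h k hk]).trans hB.sum_count_mul
    rw [sum_Icc_ite_odd] at hcard
    rw [sum_Icc_ite_odd_mul] at hsum
    exact ite_odd_weights_eq_one_of_even (by omega) hcard hsum
  · rw [sum_Icc_succ_top (by omega), sum_Icc_ite_odd, if_pos (odd_two_mul_add_one q)] at hcard
    exact ite_odd_weights_eq_one_of_odd (by omega) hcard

end IsDie

/-- If `n ≥ 4` and all `ξ_k = γ_k + γ_{k+1}` (for `k = 1,…,n-1`) are equal,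
then the die is standard: every face count equals 1. -/
theorem xi_const_implies_std (n : ℕ) (hn : 4 ≤ n) (B : Multiset ℕ) (hB : IsDie n B)
    (hxi : ∀ k ∈ Finset.Icc 1 (n - 1), ∀ l ∈ Finset.Icc 1 (n - 1),
      Multiset.count k B + Multiset.count (k + 1) B
        = Multiset.count l B + Multiset.count (l + 1) B) :
    ∀ k ∈ Finset.Icc 1 n, Multiset.count k B = 1 := by
  have hstep : ∀ k, 1 ≤ k → k + 2 ≤ n → B.count (k + 2) = B.count k := fun k hk hkn => by
    have := hxi k (mem_Icc.mpr ⟨hk, by omega⟩) (k + 1) (mem_Icc.mpr ⟨by omega, by omega⟩)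
    rw [show k + 1 + 1 = k + 2 from rfl] at this
    omega
  have hcount := eq_ite_odd_of_add_two_eq (γ := (B.count ·)) hstep
  obtain ⟨ha, hb⟩ := hB.ite_odd_weights_eq_one hn hcount
  intro k hk
  rw [hcount k hk, ha, hb, ite_self]
end

section
/- Comparison count identity: for a die B with face counts γ_1,...,γ_n and the one-step die G obtained from the standard die by increasing face s_j+1 = j+1 by 1 and decreasing face s_i = i by 1 (with i ≠ j+1), the net advantage of G over B relative to the standard die equals ξ_i − ξ_j where ξ_k = γ_k + γ_{k+1}. Consequently if ξ_i > ξ_j then G beats B. -/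
lemma wins_zero_left (B : Multiset ℕ) : wins 0 B = 0 := by simp [wins]
lemma wins_zero_right (A : Multiset ℕ) : wins A 0 = 0 := by simp [wins]

lemma wins_cons_left (a : ℕ) (A B : Multiset ℕ) :
    wins (a ::ₘ A) B = B.countP (fun b => b < a) + wins A B := by
  simp only [wins, Multiset.cons_product, Multiset.countP_add, Multiset.countP_map]
  simp [Multiset.countP_eq_card_filter]

lemma wins_cons_right (b : ℕ) (A B : Multiset ℕ) :
    wins A (b ::ₘ B) = A.countP (fun a => b < a) + wins A B := by
  simp only [wins, Multiset.product_cons, Multiset.countP_add, Multiset.countP_map]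
  simp [Multiset.countP_eq_card_filter, Nat.add_comm]

lemma countP_lt_succ (x : ℕ) (B : Multiset ℕ) :
    B.countP (fun b => b < x + 1) = B.countP (fun b => b < x) + B.count x := by
  induction B using Multiset.induction with
  | empty => simp
  | cons a s ih =>
    simp only [Multiset.countP_cons, Multiset.count_cons, ih]
    split_ifs <;> omega

lemma countP_gt (x : ℕ) (B : Multiset ℕ) :
    B.countP (fun b => x < b) = B.countP (fun b => x + 1 < b) + B.count (x + 1) := by
  induction B using Multiset.induction with
  | empty => simp
  | cons a s ih =>
    simp only [Multiset.countP_cons, Multiset.count_cons, ih]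
    split_ifs <;> omega

lemma std_succ (n : ℕ) : std (n + 1) = (n + 1) ::ₘ std n := by
  simp [std, Multiset.range_succ]

lemma countP_gt_std (n b : ℕ) : (std n).countP (fun k => b < k) = n - b := by
  induction n with
  | zero => simp [std]
  | succ n ih =>
    rw [std_succ, Multiset.countP_cons, ih]
    split_ifs <;> omega

lemma countP_lt_std (n b : ℕ) : (std n).countP (fun k => k < b) = min (b - 1) n := by
  induction n with
  | zero => simp [std]
  | succ n ih =>
    rw [std_succ, Multiset.countP_cons, ih]
    split_ifs <;> omega

lemma mem_std {n a : ℕ} (h1 : 1 ≤ a) (h2 : a ≤ n) : a ∈ std n := by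
  simp only [std, Multiset.mem_map, Multiset.mem_range]
  exact ⟨a - 1, by omega, by omega⟩

lemma wins_std_diff (n : ℕ) (B : Multiset ℕ) (h : ∀ b ∈ B, 1 ≤ b ∧ b ≤ n) :
    (wins (std n) B : ℤ) - wins B (std n)
      = Multiset.card B * (n + 1) - 2 * B.sum := by
  induction B using Multiset.induction with
  | empty => simp [wins_zero_left, wins_zero_right]
  | cons a s ih =>
    have ha := h a (Multiset.mem_cons_self a s)
    have ih' := ih (fun b hb => h b (Multiset.mem_cons_of_mem hb))
    rw [wins_cons_right, wins_cons_left, countP_gt_std, countP_lt_std]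
    rw [Multiset.sum_cons, Multiset.card_cons]
    have e1 : ((n - a : ℕ) : ℤ) = (n : ℤ) - a := by omega
    have e2 : ((min (a - 1) n : ℕ) : ℤ) = (a : ℤ) - 1 := by omega
    push_cast [e1, e2] at *
    linarith [ih']

/-- Net-advantage identity: if `G` is obtained from the standard die by adding 1 to the
face of value `i` and subtracting 1 from the face of value `j+1` (with `i ≠ j+1`), then
the net advantage of `G` over `B`, relative to that of the standard die, is `ξ_i - ξ_j`
where `ξ_k = γ_k + γ_{k+1}`.  In particular `ξ_j < ξ_i` implies `G` beats `B`. -/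
theorem one_step_net_advantage (n : ℕ) (B : Multiset ℕ) (hB : IsDie n B)
    (i j : ℕ) (hi1 : 1 ≤ i) (hin : i < n) (hj1 : 1 ≤ j) (hjn : j + 1 ≤ n)
    (hij : i ≠ j + 1)
    (G : Multiset ℕ)
    (hG : G = (i + 1) ::ₘ j ::ₘ (((std n).erase i).erase (j + 1))) :
    ((wins G B : ℤ) - (wins B G : ℤ)) -
        ((wins (std n) B : ℤ) - (wins B (std n) : ℤ))
      = ((Multiset.count i B + Multiset.count (i + 1) B : ℤ)
          - (Multiset.count j B + Multiset.count (j + 1) B : ℤ)) ∧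
    ((Multiset.count j B + Multiset.count (j + 1) B
        < Multiset.count i B + Multiset.count (i + 1) B) → Beats G B) := by
  obtain ⟨hcard, hmem, hsum⟩ := hB
  set C := ((std n).erase i).erase (j + 1) with hC
  have hiS : i ∈ std n := mem_std hi1 (le_of_lt hin)
  have hjS : (j + 1) ∈ (std n).erase i :=
    (Multiset.mem_erase_of_ne (fun h => hij h.symm)).mpr (mem_std (by omega) hjn)
  have hS : i ::ₘ (j + 1) ::ₘ C = std n := by
    rw [hC, Multiset.cons_erase hjS, Multiset.cons_erase hiS]
  have w1 : wins (std n) B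
      = B.countP (fun b => b < i) + (B.countP (fun b => b < j + 1) + wins C B) := by
    rw [← hS, wins_cons_left, wins_cons_left]
  have w2 : wins G B
      = B.countP (fun b => b < i + 1) + (B.countP (fun b => b < j) + wins C B) := by
    rw [hG, wins_cons_left, wins_cons_left]
  have w3 : wins B (std n)
      = B.countP (fun a => i < a) + (B.countP (fun a => j + 1 < a) + wins B C) := by
    rw [← hS, wins_cons_right, wins_cons_right]
  have w4 : wins B G
      = B.countP (fun a => i + 1 < a) + (B.countP (fun a => j < a) + wins B C) := by
    rw [hG, wins_cons_right, wins_cons_right]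
  have c1 := countP_lt_succ i B
  have c2 := countP_lt_succ j B
  have c3 := countP_gt i B
  have c4 := countP_gt j B
  have key : ((wins G B : ℤ) - (wins B G : ℤ)) -
        ((wins (std n) B : ℤ) - (wins B (std n) : ℤ))
      = ((Multiset.count i B + Multiset.count (i + 1) B : ℤ)
          - (Multiset.count j B + Multiset.count (j + 1) B : ℤ)) := by
    rw [w1, w2, w3, w4]; push_cast; omega
  refine ⟨key, fun hlt => ?_⟩
  have h2 : 2 * (n * (n + 1) / 2) = n * (n + 1) :=
    Nat.mul_div_cancel' (Nat.even_mul_succ_self n).two_dvd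
  have hz : (wins (std n) B : ℤ) - wins B (std n) = 0 := by
    rw [wins_std_diff n B hmem, hcard, hsum]
    have e : (2 : ℤ) * ((n * (n + 1) / 2 : ℕ) : ℤ) = ((n * (n + 1) : ℕ) : ℤ) := by
      exact_mod_cast h2
    push_cast at e ⊢
    linarith
  unfold Beats
  omega
end

section
/- For n ≥ 4 and any n-sided die B that is not the standard die, there exists an n-sided die G that beats B; moreover G can be chosen to be the result of a single one-step applied to the standard die. -/
private lemma countP_map' {α β : Type} (f : α → β) (s : Multiset α) (p : β → Prop)
    [DecidablePred p] : Multiset.countP p (s.map f) = s.countP (fun a => p (f a)) := by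
  rw [Multiset.countP_map, Multiset.countP_eq_card_filter]

private lemma wins_left (A B : Multiset ℕ) :
    wins A B = (A.map fun a => B.countP (fun b => b < a)).sum := by
  induction A using Multiset.induction with
  | empty => simp [wins, Multiset.zero_product]
  | cons a A ih =>
    rw [wins, Multiset.cons_product, Multiset.countP_add, countP_map']
    simp only [Multiset.map_cons, Multiset.sum_cons]
    rw [← wins, ih]

private lemma wins_right (A B : Multiset ℕ) :
    wins B A = (A.map fun a => B.countP (fun b => a < b)).sum := by
  induction A using Multiset.induction with
  | empty => simp [wins, Multiset.product_zero]
  | cons a A ih =>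
    rw [wins, Multiset.product_cons, Multiset.countP_add, countP_map']
    simp only [Multiset.map_cons, Multiset.sum_cons]
    rw [← wins, ih]

private lemma delta_eq (A B : Multiset ℕ) :
    (wins A B : ℤ) - wins B A
      = (A.map fun a => (B.countP (fun b => b < a) : ℤ) - B.countP (fun b => a < b)).sum := by
  rw [wins_left, wins_right]
  induction A using Multiset.induction with
  | empty => simp
  | cons a A ih =>
    simp only [Multiset.map_cons, Multiset.sum_cons]
    push_cast
    push_cast at ih
    linarith

private lemma msum_range {M : Type} [AddCommMonoid M] (n : ℕ) (f : ℕ → M) :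
    ((Multiset.range n).map f).sum = ∑ i ∈ Finset.range n, f i := by
  rw [Finset.sum]
  rfl

private lemma mem_std_s12 {n x : ℕ} : x ∈ std n ↔ 1 ≤ x ∧ x ≤ n := by
  simp only [std, Multiset.mem_map, Multiset.mem_range]
  constructor
  · rintro ⟨i, hi, rfl⟩; omega
  · rintro ⟨h1, h2⟩; exact ⟨x - 1, by omega, by omega⟩

private lemma card_std (n : ℕ) : Multiset.card (std n) = n := by simp [std]

private lemma nodup_std (n : ℕ) : (std n).Nodup :=
  (Multiset.nodup_range n).map (fun a b h => by omega)

private lemma sum_std (n : ℕ) : (std n).sum = n * (n + 1) / 2 := by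
  have h1 : (std n).sum = ∑ i ∈ Finset.range n, (i + 1) := by
    rw [std, msum_range]
  have h2 : (∑ i ∈ Finset.range n, i) * 2 = n * (n - 1) := Finset.sum_range_id_mul_two n
  have h3 : ∑ i ∈ Finset.range n, (i + 1) = (∑ i ∈ Finset.range n, i) + n := by
    rw [Finset.sum_add_distrib, Finset.sum_const, Finset.card_range, smul_eq_mul, mul_one]
  have h4 : n * (n + 1) = n * (n - 1) + 2 * n := by
    cases n with
    | zero => simp
    | succ m => have : (m + 1) * (m + 2) = (m + 1) * m + 2 * (m + 1) := by ring
                simpa using this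
  omega

private lemma ind_lt2 (b n : ℕ) :
    ∑ i ∈ Finset.range n, (if b < i + 1 then 1 else 0) = n - b := by
  induction n with
  | zero => simp
  | succ n ih => rw [Finset.sum_range_succ, ih]; split_ifs <;> omega

private lemma sumL (n : ℕ) (B : Multiset ℕ) (h : ∀ b ∈ B, 1 ≤ b ∧ b ≤ n) :
    (∑ i ∈ Finset.range n, B.countP (fun b => b < i + 1)) + B.sum
      = n * Multiset.card B := by
  induction B using Multiset.induction with
  | empty => simp
  | cons a B ih =>
    have ha := h a (Multiset.mem_cons_self a B)
    have ih' := ih (fun b hb => h b (Multiset.mem_cons_of_mem hb))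
    simp only [Multiset.countP_cons, Finset.sum_add_distrib, Multiset.sum_cons,
      Multiset.card_cons, Nat.mul_add, Nat.mul_one, ind_lt2]
    omega

private lemma ind_gt2 (b n : ℕ) :
    ∑ i ∈ Finset.range n, (if i + 1 < b then 1 else 0) = min (b - 1) n := by
  induction n with
  | zero => simp
  | succ n ih => rw [Finset.sum_range_succ, ih]; split_ifs <;> omega

private lemma sumU (n : ℕ) (B : Multiset ℕ) (h : ∀ b ∈ B, 1 ≤ b ∧ b ≤ n) :
    (∑ i ∈ Finset.range n, B.countP (fun b => i + 1 < b)) + Multiset.card B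
      = B.sum := by
  induction B using Multiset.induction with
  | empty => simp
  | cons a B ih =>
    have ha := h a (Multiset.mem_cons_self a B)
    have ih' := ih (fun b hb => h b (Multiset.mem_cons_of_mem hb))
    simp only [Multiset.countP_cons, Finset.sum_add_distrib, Multiset.sum_cons,
      Multiset.card_cons, ind_gt2]
    omega

private lemma delta_std (n : ℕ) (B : Multiset ℕ) (hB : IsDie n B) :
    (wins (std n) B : ℤ) - wins B (std n) = 0 := by
  obtain ⟨hcard, hbounds, hsum⟩ := hB
  rw [delta_eq, std, Multiset.map_map, msum_range]
  have hL := sumL n B hbounds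
  have hU := sumU n B hbounds
  have hsplit : ∑ i ∈ Finset.range n,
      ((B.countP (fun b => b < (i+1)) : ℤ) - B.countP (fun b => (i+1) < b))
      = ((∑ i ∈ Finset.range n, B.countP (fun b => b < i + 1) : ℕ) : ℤ)
        - ((∑ i ∈ Finset.range n, B.countP (fun b => i + 1 < b) : ℕ) : ℤ) := by
    push_cast
    rw [Finset.sum_sub_distrib]
  simp only [Function.comp]
  rw [hsplit]
  obtain ⟨m, hm⟩ := Nat.even_mul_succ_self n
  have h2 : n * (n + 1) = 2 * (n * (n + 1) / 2) := by omega
  have h3 : n * (n + 1) = n * n + n := by ring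
  rw [hcard] at hL hU
  omega

private lemma countP_lt_succ2 (B : Multiset ℕ) (k : ℕ) :
    B.countP (fun b => b < k + 1) = B.countP (fun b => b < k) + B.count k := by
  induction B using Multiset.induction with
  | empty => simp
  | cons a B ih =>
    simp only [Multiset.countP_cons, Multiset.count_cons, ih]
    split_ifs <;> omega

private lemma countP_gt_succ2 (B : Multiset ℕ) (k : ℕ) :
    B.countP (fun b => k < b) = B.countP (fun b => k + 1 < b) + B.count (k + 1) := by
  induction B using Multiset.induction with
  | empty => simp
  | cons a B ih =>
    simp only [Multiset.countP_cons, Multiset.count_cons, ih]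
    split_ifs <;> omega

private lemma delta_pair (B : Multiset ℕ) (k : ℕ) :
    ((B.countP (fun x => x < k + 1) : ℤ) - B.countP (fun x => k + 1 < x))
      = ((B.countP (fun x => x < k) : ℤ) - B.countP (fun x => k < x))
        + B.count k + B.count (k + 1) := by
  have h1 := countP_lt_succ2 B k
  have h2 := countP_gt_succ2 B k
  omega

private lemma count_std (n k : ℕ) :
    (std n).count k = if 1 ≤ k ∧ k ≤ n then 1 else 0 := by
  split_ifs with h
  · exact Multiset.count_eq_one_of_mem (nodup_std n) (mem_std_s12.mpr h)
  · exact Multiset.count_eq_zero.mpr (fun hk => h (mem_std_s12.mp hk))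

private lemma ind_eq (b n : ℕ) :
    ∑ i ∈ Finset.range n, (if i + 1 = b then 1 else 0) = if 1 ≤ b ∧ b ≤ n then 1 else 0 := by
  induction n with
  | zero => rw [Finset.sum_range_zero]; split_ifs <;> omega
  | succ n ih => rw [Finset.sum_range_succ, ih]; split_ifs <;> omega

private lemma ind_eq' (b n : ℕ) :
    ∑ i ∈ Finset.range n, (i + 1) * (if i + 1 = b then 1 else 0)
      = if 1 ≤ b ∧ b ≤ n then b else 0 := by
  induction n with
  | zero => rw [Finset.sum_range_zero]; split_ifs <;> omega
  | succ n ih => rw [Finset.sum_range_succ, ih]; split_ifs <;> omega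

private lemma sumC (n : ℕ) (B : Multiset ℕ) (h : ∀ b ∈ B, 1 ≤ b ∧ b ≤ n) :
    (∑ i ∈ Finset.range n, B.count (i + 1)) = Multiset.card B := by
  induction B using Multiset.induction with
  | empty => simp
  | cons a B ih =>
    have ha := h a (Multiset.mem_cons_self a B)
    have ih' := ih (fun b hb => h b (Multiset.mem_cons_of_mem hb))
    simp only [Multiset.count_cons, Finset.sum_add_distrib, Multiset.card_cons, ind_eq]
    split_ifs <;> omega

private lemma sumT (n : ℕ) (B : Multiset ℕ) (h : ∀ b ∈ B, 1 ≤ b ∧ b ≤ n) :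
    (∑ i ∈ Finset.range n, (i + 1) * B.count (i + 1)) = B.sum := by
  induction B using Multiset.induction with
  | empty => simp
  | cons a B ih =>
    have ha := h a (Multiset.mem_cons_self a B)
    have ih' := ih (fun b hb => h b (Multiset.mem_cons_of_mem hb))
    simp only [Multiset.count_cons, Multiset.sum_cons, Nat.mul_add,
      Finset.sum_add_distrib, ind_eq']
    split_ifs <;> omega

private lemma const_eq_std (n : ℕ) (hn : 4 ≤ n) (B : Multiset ℕ) (hB : IsDie n B)
    (hconst : ∀ k, 1 ≤ k → k + 2 ≤ n →
      B.count k + B.count (k + 1) = B.count (k + 1) + B.count (k + 2)) :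
    B = std n := by
  obtain ⟨hcard, hbounds, hsum⟩ := hB
  have hper : ∀ j k, 1 ≤ k → k + 2 * j ≤ n → B.count (k + 2 * j) = B.count k := by
    intro j
    induction j with
    | zero => intro k _ _; norm_num
    | succ j ih =>
      intro k hk1 hk2
      have e : k + 2 * (j + 1) = (k + 2 * j) + 2 := by ring
      rw [e]
      have h1 := hconst (k + 2 * j) (by omega) (by omega)
      have h2 := ih k hk1 (by omega)
      omega
  set x := B.count 1 with hxdef
  set y := B.count 2 with hydef
  have hx : ∀ k, 1 ≤ k → k ≤ n → k % 2 = 1 → B.count k = x := by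
    intro k h1 h2 h3
    have e : k = 1 + 2 * ((k - 1) / 2) := by omega
    rw [e] at h2 ⊢
    exact hper _ 1 (by omega) h2
  have hy : ∀ k, 2 ≤ k → k ≤ n → k % 2 = 0 → B.count k = y := by
    intro k h1 h2 h3
    have e : k = 2 + 2 * ((k - 2) / 2) := by omega
    rw [e] at h2 ⊢
    exact hper _ 2 (by omega) h2
  have twostep : ∀ m, 2 * m ≤ n →
      (∑ i ∈ Finset.range (2 * m), B.count (i + 1)) = m * (x + y) ∧
      (∑ i ∈ Finset.range (2 * m), (i + 1) * B.count (i + 1))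
        = x * m ^ 2 + y * (m ^ 2 + m) := by
    intro m
    induction m with
    | zero => simp
    | succ m ih =>
      intro hm
      obtain ⟨ih1, ih2⟩ := ih (by omega)
      have e : 2 * (m + 1) = (2 * m) + 1 + 1 := by ring
      have hv1 : B.count (2 * m + 1) = x := hx _ (by omega) (by omega) (by omega)
      have hv2 : B.count (2 * m + 1 + 1) = y := hy _ (by omega) (by omega) (by omega)
      rw [e, Finset.sum_range_succ, Finset.sum_range_succ, ih1, hv1, hv2,
        Finset.sum_range_succ, Finset.sum_range_succ, ih2, hv1, hv2]
      constructor
      · ring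
      · ring
  clear_value x y
  have hC := sumC n B hbounds
  have hT := sumT n B hbounds
  rw [hcard] at hC
  rw [hsum] at hT
  obtain ⟨c2, hc2⟩ := Nat.even_mul_succ_self n
  have hxy : x = 1 ∧ y = 1 := by
    rcases Nat.even_or_odd n with he | ho
    · obtain ⟨m, hm⟩ := he
      have hm' : n = 2 * m := by omega
      obtain ⟨t1, t2⟩ := twostep m (by omega)
      rw [hm', t1] at hC
      rw [hm', t2] at hT
      have hmx : 2 ≤ m := by omega
      have hxy2 : x + y = 2 := by
        have : m * (x + y) = m * 2 := by omega
        exact Nat.eq_of_mul_eq_mul_left (by omega) this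
      -- hT : x * m^2 + y * (m^2 + m) = 2*m*(2*m+1)/2
      have hT' : x * m ^ 2 + y * (m ^ 2 + m) = m * (2 * m + 1) := by
        have h5 : 2 * m * (2 * m + 1) = 2 * (m * (2 * m + 1)) := by ring
        omega
      have hx2 : x ≤ 2 := by omega
      interval_cases x
      · exfalso
        have hy2 : y = 2 := by omega
        rw [hy2] at hT'
        have : 2 * (m ^ 2 + m) = m * (2 * m + 1) + m := by ring
        omega
      · exact ⟨rfl, by omega⟩
      · exfalso
        have hy0 : y = 0 := by omega
        rw [hy0] at hT'
        have : m * (2 * m + 1) = 2 * m ^ 2 + m := by ring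
        omega
    · obtain ⟨m, hm⟩ := ho
      have hm2 : 2 ≤ m := by omega
      obtain ⟨t1, t2⟩ := twostep m (by omega)
      have hns : n = 2 * m + 1 := by omega
      rw [hns, Finset.sum_range_succ, t1] at hC
      have hlast : B.count (2 * m + 1) = x := hx _ (by omega) (by omega) (by omega)
      rw [hlast] at hC
      -- hC : m * (x + y) + x = 2 * m + 1
      have hx1 : x ≤ 1 := by
        by_contra h
        push_neg at h
        have : m * 2 ≤ m * (x + y) := Nat.mul_le_mul_left m (by omega)
        omega
      interval_cases x
      · exfalso
        -- m * y = 2 * m + 1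
        have hmy : m * y = 2 * m + 1 := by
          have : m * (0 + y) = m * y := by ring
          omega
        have hy3 : 3 ≤ y := by
          by_contra h
          push_neg at h
          have : m * y ≤ m * 2 := Nat.mul_le_mul_left m (by omega)
          omega
        have : m * 3 ≤ m * y := Nat.mul_le_mul_left m hy3
        omega
      · refine ⟨rfl, ?_⟩
        -- m * (1 + y) + 1 = 2 * m + 1  →  m * y = m
        have h6 : m * (1 + y) = m * 1 + m * y := by ring
        have h7 : m * y = m * 1 := by omega
        have := Nat.eq_of_mul_eq_mul_left (show 0 < m by omega) h7
        omega
  -- all counts are 1 on [1, n]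
  have hcnt : ∀ k, 1 ≤ k → k ≤ n → B.count k = 1 := by
    intro k h1 h2
    rcases Nat.even_or_odd k with he | ho
    · obtain ⟨j, hj⟩ := he
      rw [hy k (by omega) h2 (by omega)]; exact hxy.2
    · obtain ⟨j, hj⟩ := ho
      rw [hx k h1 h2 (by omega)]; exact hxy.1
  ext k
  rw [count_std]
  split_ifs with h
  · exact hcnt k h.1 h.2
  · exact Multiset.count_eq_zero.mpr (fun hk => h ⟨(hbounds k hk).1, (hbounds k hk).2⟩)


/-- For `n ≥ 4`, every nonstandard die is beaten by some die, which moreover can be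
chosen one one-step away from the standard die. -/
theorem nonstandard_beaten (n : ℕ) (hn : 4 ≤ n) (B : Multiset ℕ) (hB : IsDie n B)
    (hBne : B ≠ std n) :
    ∃ G : Multiset ℕ, IsDie n G ∧ Beats G B ∧
      ∃ a ∈ std n, ∃ b ∈ (std n).erase a, a ≠ 1 ∧ b ≠ n ∧
        G = (b + 1) ::ₘ (a - 1) ::ₘ (((std n).erase a).erase b) := by
  obtain ⟨hcard, hbounds, hsum⟩ := hB
  by_cases hconst : ∀ k, 1 ≤ k → k + 2 ≤ n →
      B.count k + B.count (k + 1) = B.count (k + 1) + B.count (k + 2)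
  · exact absurd (const_eq_std n hn B ⟨hcard, hbounds, hsum⟩ hconst) hBne
  push_neg at hconst
  obtain ⟨k₀, hk01, hk02, hk0ne⟩ := hconst
  obtain ⟨k₁, k₂, h11, h12, h21, h22, hne12, hgt⟩ :
      ∃ k₁ k₂, 1 ≤ k₁ ∧ k₁ + 1 ≤ n ∧ 1 ≤ k₂ ∧ k₂ + 1 ≤ n ∧ k₂ ≠ k₁ + 1 ∧
        B.count k₁ + B.count (k₁ + 1) < B.count k₂ + B.count (k₂ + 1) := by
    have e : k₀ + 1 + 1 = k₀ + 2 := by omega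
    rcases Nat.lt_or_ge (B.count k₀ + B.count (k₀ + 1))
        (B.count (k₀ + 1) + B.count (k₀ + 2)) with h | h
    · by_cases hw : k₀ = 1
      · rcases Nat.lt_or_ge (B.count k₀ + B.count (k₀ + 1))
            (B.count 3 + B.count (3 + 1)) with h2 | h2
        · exact ⟨k₀, 3, by omega, by omega, by omega, by omega, by omega, h2⟩
        · exact ⟨3, k₀ + 1, by omega, by omega, by omega, by omega, by omega,
            by rw [e]; exact lt_of_le_of_lt h2 h⟩
      · rcases Nat.lt_or_ge (B.count k₀ + B.count (k₀ + 1))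
            (B.count 1 + B.count (1 + 1)) with h2 | h2
        · exact ⟨k₀, 1, by omega, by omega, by omega, by omega, by omega, h2⟩
        · exact ⟨1, k₀ + 1, by omega, by omega, by omega, by omega, by omega,
            by rw [e]; exact lt_of_le_of_lt h2 h⟩
    · have h' : B.count (k₀ + 1) + B.count (k₀ + 2) < B.count k₀ + B.count (k₀ + 1) :=
        lt_of_le_of_ne h (fun ee => hk0ne ee.symm)
      exact ⟨k₀ + 1, k₀, by omega, by omega, by omega, by omega, by omega,
        by rw [e]; exact h'⟩
  have ha : k₁ + 1 ∈ std n := mem_std_s12.mpr ⟨by omega, by omega⟩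
  have hbmem : k₂ ∈ (std n).erase (k₁ + 1) :=
    (Multiset.mem_erase_of_ne hne12).mpr (mem_std_s12.mpr ⟨h21, by omega⟩)
  obtain ⟨R, hR1, hR2⟩ : ∃ R, std n = (k₁ + 1) ::ₘ k₂ ::ₘ R ∧
      ((std n).erase (k₁ + 1)).erase k₂ = R :=
    ⟨((std n).erase (k₁ + 1)).erase k₂,
      by rw [Multiset.cons_erase hbmem, Multiset.cons_erase ha], rfl⟩
  refine ⟨(k₂ + 1) ::ₘ k₁ ::ₘ R, ⟨?_, ?_, ?_⟩, ?_, k₁ + 1, ha, k₂, hbmem,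
    by omega, by omega, ?_⟩
  · -- card
    have hc := card_std n
    rw [hR1] at hc
    simp only [Multiset.card_cons] at hc ⊢
    omega
  · -- bounds
    intro d hd
    simp only [Multiset.mem_cons] at hd
    rcases hd with rfl | rfl | hd
    · omega
    · omega
    · have hds : d ∈ std n := by
        rw [hR1]
        exact Multiset.mem_cons_of_mem (Multiset.mem_cons_of_mem hd)
      have := mem_std_s12.mp hds
      omega
  · -- sum
    have hs := sum_std n
    rw [hR1] at hs
    simp only [Multiset.sum_cons] at hs ⊢
    omega
  · -- Beats
    have hd1 := delta_eq ((k₂ + 1) ::ₘ k₁ ::ₘ R) B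
    have hd2 := delta_eq (std n) B
    have hz := delta_std n B ⟨hcard, hbounds, hsum⟩
    rw [hR1] at hd2 hz
    simp only [Multiset.map_cons, Multiset.sum_cons] at hd1 hd2
    have hp1 := delta_pair B k₁
    have hp2 := delta_pair B k₂
    unfold Beats
    omega
  · -- G shape
    rw [hR2]
    norm_num
end

section
/- Connectivity under one-steps: for n ≥ 2, any n-sided die can be reached from the standard die S_n by a finite sequence of one-steps. -/
/-- One-step relation on dice: decrease a face `≠ 1` by one and increase a distinct
face `≠ n` by one. -/
def OneStep (n : ℕ) (D E : Multiset ℕ) : Prop :=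
  ∃ a ∈ D, ∃ b ∈ D.erase a, a ≠ 1 ∧ b ≠ n ∧
    E = (b + 1) ::ₘ (a - 1) ::ₘ ((D.erase a).erase b)

namespace DieConn

/-- cumulative count of faces `≤ k` -/
def Fc (D : Multiset ℕ) (k : ℕ) : ℕ := Multiset.countP (fun d => d ≤ k) D

/-- deviation of the cumulative count from that of the standard die -/
def Gv (D : Multiset ℕ) (k : ℕ) : ℤ := (Fc D k : ℤ) - k

/-- potential -/
def Phi (n : ℕ) (D : Multiset ℕ) : ℕ := ∑ k ∈ Finset.range n, (Gv D k).natAbs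

lemma Fc_cons (a : ℕ) (s : Multiset ℕ) (k : ℕ) :
    Fc (a ::ₘ s) k = Fc s k + if a ≤ k then 1 else 0 := by
  simp [Fc, Multiset.countP_cons]

lemma Fc_succ (D : Multiset ℕ) (k : ℕ) : Fc D (k + 1) = Fc D k + D.count (k + 1) := by
  induction D using Multiset.induction_on with
  | empty => simp [Fc]
  | cons a s ih =>
    rw [Fc_cons, Fc_cons, Multiset.count_cons, ih]
    split_ifs <;> omega

lemma Fc_zero (D : Multiset ℕ) (h : ∀ d ∈ D, 1 ≤ d) : Fc D 0 = 0 :=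
  Multiset.countP_eq_zero.2 (fun d hd => by have := h d hd; omega)

lemma Fc_top (n : ℕ) (D : Multiset ℕ) (hcard : Multiset.card D = n)
    (h : ∀ d ∈ D, d ≤ n) : Fc D n = n := by
  rw [Fc, Multiset.countP_eq_card.2 h, hcard]

lemma sum_Fc (n : ℕ) (D : Multiset ℕ) (h : ∀ d ∈ D, 1 ≤ d ∧ d ≤ n) :
    ∑ k ∈ Finset.range n, (Fc D k : ℤ) = n * Multiset.card D - D.sum := by
  induction D using Multiset.induction_on with
  | empty => simp [Fc]
  | cons a s ih =>
    have ha := h a (Multiset.mem_cons_self a s)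
    have hs := ih (fun d hd => h d (Multiset.mem_cons_of_mem hd))
    have hind : ∑ k ∈ Finset.range n, ((if a ≤ k then 1 else 0 : ℤ)) = n - a := by
      rw [Finset.sum_boole]
      have : Finset.filter (fun k => a ≤ k) (Finset.range n) = Finset.Ico a n := by
        ext x
        simp [Finset.mem_filter, Finset.mem_range, Finset.mem_Ico, and_comm]
      rw [this, Nat.card_Ico]
      have : a ≤ n := ha.2
      omega
    calc ∑ k ∈ Finset.range n, (Fc (a ::ₘ s) k : ℤ)
        = ∑ k ∈ Finset.range n, ((Fc s k : ℤ) + if a ≤ k then 1 else 0) := by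
          apply Finset.sum_congr rfl; intro k _; rw [Fc_cons]; split_ifs <;> simp
      _ = (n * Multiset.card s - s.sum) + (n - a) := by rw [Finset.sum_add_distrib, hs, hind]
      _ = n * Multiset.card (a ::ₘ s) - (a ::ₘ s).sum := by
          simp [Multiset.card_cons, Multiset.sum_cons]; push_cast; ring
  
lemma sum_Gv (n : ℕ) (D : Multiset ℕ) (hD : IsDie n D) :
    ∑ k ∈ Finset.range n, Gv D k = 0 := by
  obtain ⟨hcard, hmem, hsum⟩ := hD
  have h1 : ∑ k ∈ Finset.range n, (Fc D k : ℤ) = n * n - D.sum := by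
    rw [sum_Fc n D hmem, hcard]
  have h2 : 2 * (D.sum : ℤ) = n * (n + 1) := by
    have he : 2 * (n * (n + 1) / 2) = n * (n + 1) :=
      Nat.two_mul_div_two_of_even (Nat.even_mul_succ_self n)
    rw [hsum]
    exact_mod_cast he
  rcases Nat.eq_zero_or_pos n with rfl | hn1
  · simp
  have h3 : (∑ i ∈ Finset.range n, (i : ℤ)) * 2 = (n : ℤ) * ((n : ℤ) - 1) := by
    have h := Finset.sum_range_id_mul_two n
    have h' : ((∑ i ∈ Finset.range n, i : ℕ) : ℤ) * 2 = ((n * (n - 1) : ℕ) : ℤ) := by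
      exact_mod_cast h
    push_cast [Nat.cast_sub hn1] at h'
    linarith [h']
  have h5 : ∑ k ∈ Finset.range n, Gv D k
      = ∑ k ∈ Finset.range n, (Fc D k : ℤ) - ∑ k ∈ Finset.range n, (k : ℤ) := by
    rw [← Finset.sum_sub_distrib]; rfl
  rw [h5, h1]; nlinarith [h2, h3]

lemma count_eq (D : Multiset ℕ) (k : ℕ) :
    (D.count (k + 1) : ℤ) = Gv D (k + 1) - Gv D k + 1 := by
  have := Fc_succ D k
  simp only [Gv]
  push_cast
  omega

lemma count_std (n k : ℕ) : (std n).count k = if 1 ≤ k ∧ k ≤ n then 1 else 0 := by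
  have hnd : (std n).Nodup := by
    refine Multiset.Nodup.map (fun a b h => by omega) (Multiset.nodup_range n)
  have hmem : k ∈ std n ↔ 1 ≤ k ∧ k ≤ n := by
    simp only [std, Multiset.mem_map, Multiset.mem_range]
    constructor
    · rintro ⟨j, hj, rfl⟩; omega
    · rintro ⟨h1, h2⟩; exact ⟨k - 1, by omega, by omega⟩
  split_ifs with h
  · have h1 : 0 < (std n).count k := Multiset.count_pos.2 (hmem.2 h)
    have h2 := Multiset.nodup_iff_count_le_one.1 hnd k
    omega
  · exact Multiset.count_eq_zero.2 (fun hm => h (hmem.1 hm))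

lemma eq_std (n : ℕ) (D : Multiset ℕ) (hD : IsDie n D) (h : ∀ k, k < n → Gv D k = 0) :
    D = std n := by
  obtain ⟨hcard, hmem, hsum⟩ := hD
  have hFc : ∀ k, k ≤ n → Fc D k = k := by
    intro k hk
    rcases lt_or_eq_of_le hk with hk | rfl
    · have := h k hk; simp only [Gv] at this; omega
    · exact Fc_top k D hcard (fun d hd => (hmem d hd).2)
  ext k
  rw [count_std]
  rcases Nat.eq_zero_or_pos k with rfl | hk1
  · have h0 : (0 : ℕ) ∉ D := fun hm => by have := hmem 0 hm; omega
    simp [Multiset.count_eq_zero.2 h0]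
  by_cases hkn : k ≤ n
  · have h1 : Fc D k = k := hFc k hkn
    have h2 : Fc D (k - 1) = k - 1 := hFc (k - 1) (by omega)
    have h3 := Fc_succ D (k - 1)
    have hk : k - 1 + 1 = k := by omega
    rw [hk] at h3
    rw [if_pos ⟨hk1, hkn⟩]
    omega
  · have hnm : k ∉ D := fun hm => hkn (hmem k hm).2
    rw [Multiset.count_eq_zero.2 hnm, if_neg (fun hh => hkn hh.2)]

/-- Key step: a non-standard die admits a reversible one-step decreasing the potential. -/
lemma key (n : ℕ) (D : Multiset ℕ) (hD : IsDie n D) (hne : D ≠ std n) :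
    ∃ E, IsDie n E ∧ OneStep n D E ∧ OneStep n E D ∧ Phi n E < Phi n D := by
  obtain ⟨hcard, hmem, hsum⟩ := hD
  have hG0 : Gv D 0 = 0 := by
    simp [Gv, Fc_zero D (fun d hd => (hmem d hd).1)]
  have hGn : Gv D n = 0 := by
    simp [Gv, Fc_top n D hcard (fun d hd => (hmem d hd).2)]
  have hsum0 : ∑ k ∈ Finset.range n, Gv D k = 0 := sum_Gv n D ⟨hcard, hmem, hsum⟩
  -- there is a nonzero G value
  have hex : ∃ k, k < n ∧ Gv D k ≠ 0 := by
    by_contra hall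
    push_neg at hall
    exact hne (eq_std n D ⟨hcard, hmem, hsum⟩ (fun k hk => hall k hk))
  -- hence both a positive and a negative value
  have hpos : ∃ k, k < n ∧ 0 < Gv D k := by
    by_contra hall
    push_neg at hall
    have := (Finset.sum_eq_zero_iff_of_nonneg (f := fun k => -Gv D k)
      (s := Finset.range n) (fun i hi => by
        simpa using neg_nonneg.2 (hall i (Finset.mem_range.1 hi)))).1
      (by rw [Finset.sum_neg_distrib, hsum0, neg_zero])
    obtain ⟨k, hk, hkne⟩ := hex
    have h9 := this k (Finset.mem_range.2 hk)
    simp only [neg_eq_zero] at h9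
    exact hkne h9
  have hneg : ∃ k, k < n ∧ Gv D k < 0 := by
    by_contra hall
    push_neg at hall
    have := (Finset.sum_eq_zero_iff_of_nonneg (f := fun k => Gv D k)
      (s := Finset.range n) (fun i hi => hall i (Finset.mem_range.1 hi))).1 hsum0
    obtain ⟨k, hk, hkne⟩ := hex
    exact hkne (this k (Finset.mem_range.2 hk))
  -- minimal positive position
  classical
  obtain ⟨k₀, hk₀n, hk₀pos, hk₀1, hGk₀pred⟩ :
      ∃ k, k < n ∧ 0 < Gv D k ∧ 1 ≤ k ∧ Gv D (k - 1) ≤ 0 := by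
    refine ⟨Nat.find hpos, (Nat.find_spec hpos).1, (Nat.find_spec hpos).2, ?_, ?_⟩
    · rcases Nat.eq_zero_or_pos (Nat.find hpos) with h | h
      · have := (Nat.find_spec hpos).2; rw [h] at this; rw [h] at *; omega
      · exact h
    · have h1 : 1 ≤ Nat.find hpos := by
        rcases Nat.eq_zero_or_pos (Nat.find hpos) with h | h
        · have := (Nat.find_spec hpos).2; rw [h] at this; omega
        · exact h
      have h2 := Nat.find_min hpos (m := Nat.find hpos - 1) (by omega)
      have h3 : Nat.find hpos - 1 < n := by
        have := (Nat.find_spec hpos).1; omega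
      push_neg at h2
      exact h2 h3
  -- maximal negative position
  obtain ⟨m₀, hm₀1, hm₀n, hm₀neg, hGm₀succ⟩ :
      ∃ m, 1 ≤ m ∧ m + 1 ≤ n ∧ Gv D m < 0 ∧ 0 ≤ Gv D (m + 1) := by
    set mm := Nat.findGreatest (fun m => Gv D m < 0) (n - 1) with hmm
    have hspec : Gv D mm < 0 := by
      obtain ⟨m, hmn, hmneg⟩ := hneg
      exact Nat.findGreatest_spec (P := fun m => Gv D m < 0) (n := n - 1) (m := m)
        (by omega) hmneg
    have hle : mm ≤ n - 1 := Nat.findGreatest_le (n - 1)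
    have h1 : 1 ≤ mm := by
      rcases Nat.eq_zero_or_pos mm with h | h
      · rw [h] at hspec; omega
      · exact h
    have hn1 : 1 ≤ n := by
      obtain ⟨m, hmn, _⟩ := hneg; omega
    refine ⟨mm, h1, by omega, hspec, ?_⟩
    by_cases h : mm + 1 ≤ n - 1
    · have := Nat.findGreatest_is_greatest (P := fun m => Gv D m < 0)
        (k := mm + 1) (n := n - 1) (by omega) h
      simp only [not_lt] at this
      exact this
    · have heq : mm + 1 = n := by omega
      rw [heq, hGn]
  -- the faces
  obtain ⟨a, b, ha2, han, hb1, hbn, hGaneg, hGbpos, hca, hcb⟩ :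
      ∃ a b, 2 ≤ a ∧ a ≤ n ∧ 1 ≤ b ∧ b < n ∧ Gv D (a - 1) < 0 ∧ 0 < Gv D b ∧
        2 ≤ D.count a ∧ 1 ≤ D.count b := by
    refine ⟨m₀ + 1, k₀, by omega, by omega, by omega, hk₀n,
      by simpa using hm₀neg, hk₀pos, ?_, ?_⟩
    · have := count_eq D m₀; omega
    · have := count_eq D (k₀ - 1)
      have hk : k₀ - 1 + 1 = k₀ := by omega
      rw [hk] at this
      omega
  have haD : a ∈ D := Multiset.count_pos.1 (by omega)
  have hbD : b ∈ D.erase a := by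
    rw [← Multiset.count_pos]
    by_cases hab : b = a
    · rw [hab, Multiset.count_erase_self]; omega
    · rw [Multiset.count_erase_of_ne hab]; omega
  set M := (D.erase a).erase b with hM_def
  have hDdec : D = a ::ₘ b ::ₘ M := by
    rw [hM_def, Multiset.cons_erase hbD, Multiset.cons_erase haD]
  set E := (b + 1) ::ₘ (a - 1) ::ₘ M with hE_def
  have hstep : OneStep n D E := ⟨a, haD, b, hbD, by omega, by omega, rfl⟩
  have hstep' : OneStep n E D := by
    refine ⟨b + 1, Multiset.mem_cons_self _ _, a - 1, ?_, by omega, by omega, ?_⟩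
    · rw [hE_def, Multiset.erase_cons_head]
      exact Multiset.mem_cons_self _ _
    · rw [hE_def, Multiset.erase_cons_head, Multiset.erase_cons_head]
      have h1 : b + 1 - 1 = b := by omega
      have h2 : a - 1 + 1 = a := by omega
      rw [h1, h2, ← hDdec]
  have hMmem : ∀ d ∈ M, 1 ≤ d ∧ d ≤ n := by
    intro d hd
    apply hmem
    rw [hDdec]
    exact Multiset.mem_cons_of_mem (Multiset.mem_cons_of_mem hd)
  have hEdie : IsDie n E := by
    refine ⟨?_, ?_, ?_⟩
    · have h1 : Multiset.card D = Multiset.card M + 2 := by rw [hDdec]; simp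
      have h2 : Multiset.card E = Multiset.card M + 2 := by rw [hE_def]; simp
      omega
    · intro d hd
      rw [hE_def] at hd
      rcases Multiset.mem_cons.1 hd with rfl | hd
      · constructor <;> omega
      rcases Multiset.mem_cons.1 hd with rfl | hd
      · constructor <;> omega
      · exact hMmem d hd
    · have h1 : D.sum = a + (b + M.sum) := by rw [hDdec]; simp
      have h2 : E.sum = (b + 1) + ((a - 1) + M.sum) := by rw [hE_def]; simp
      omega
  -- potential decreases
  have hGvE : ∀ k, Gv E k
      = Gv D k + (if k = a - 1 then 1 else 0) - (if k = b then 1 else 0) := by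
    intro k
    have hFE : Fc E k
        = Fc M k + ((if a - 1 ≤ k then 1 else 0) + (if b + 1 ≤ k then 1 else 0)) := by
      rw [hE_def, Fc_cons, Fc_cons]; ring
    have hFD : Fc D k = Fc M k + ((if b ≤ k then 1 else 0) + (if a ≤ k then 1 else 0)) := by
      rw [hDdec, Fc_cons, Fc_cons]; ring
    simp only [Gv, hFE, hFD]
    push_cast
    split_ifs <;> omega
  have hne' : a - 1 ≠ b := by
    intro h
    rw [h] at hGaneg
    omega
  have hphi : Phi n E < Phi n D := by
    apply Finset.sum_lt_sum
    · intro k _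
      have h := hGvE k
      by_cases h1 : k = a - 1
      · subst h1
        by_cases h2 : a - 1 = b
        · rw [if_pos rfl, if_pos h2] at h; omega
        · rw [if_pos rfl, if_neg h2] at h; omega
      · by_cases h2 : k = b
        · subst h2
          rw [if_neg h1, if_pos rfl] at h; omega
        · rw [if_neg h1, if_neg h2] at h; omega
    · refine ⟨b, Finset.mem_range.2 hbn, ?_⟩
      have h := hGvE b
      rw [if_neg (fun hh => hne' hh.symm), if_pos rfl] at h
      omega
  exact ⟨E, hEdie, hstep, hstep', hphi⟩

lemma reach_aux (n : ℕ) : ∀ m D, IsDie n D → Phi n D ≤ m →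
    Relation.ReflTransGen (OneStep n) (std n) D := by
  intro m
  induction m with
  | zero =>
    intro D hD hle
    have h0 : ∀ k, k < n → Gv D k = 0 := by
      intro k hk
      have : (Gv D k).natAbs = 0 := by
        have hle' : Phi n D = 0 := by omega
        have := (Finset.sum_eq_zero_iff_of_nonneg
          (f := fun k => (Gv D k).natAbs) (s := Finset.range n)
          (fun i _ => Nat.zero_le _)).1 hle' k (Finset.mem_range.2 hk)
        exact this
      omega
    rw [eq_std n D hD h0]
  | succ m ih =>
    intro D hD hle
    by_cases h : D = std n
    · rw [h]
    · obtain ⟨E, hE, _, hED, hlt⟩ := key n D hD h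
      exact (ih E hE (by omega)).tail hED

end DieConn

/-- Connectivity: for `n ≥ 2`, any die is reachable from the standard die by a finite
sequence of one-steps. -/
theorem std_reaches_all (n : ℕ) (hn : 2 ≤ n) (D : Multiset ℕ) (hD : IsDie n D) :
    Relation.ReflTransGen (OneStep n) (std n) D :=
  DieConn.reach_aux n (DieConn.Phi n D) D hD le_rfl
end
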